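/- The measure μ_t(ds) = (t/(2√π)) e^{-t²/(4s)} s^{-3/2} ds is a probability measure on (0,∞) for every t > 0. -/

import Mathlib

open MeasureTheory Real Set

/-! The substitution `s = x⁻²` turns the density into the half-Gaussian `(t / √π) e^{-t² x² / 4}`
on `(0, ∞)`, whose integral is `1`. -/

noncomputable def levyDensity (t s : ℝ) : ℝ :=
  t / (2 * √π) * exp (-t ^ 2 / (4 * s)) * s ^ (-(3 : ℝ) / 2)

theorem isProbabilityMeasure_withDensity_ofReal {α : Type*} [MeasurableSpace α]
    {μ : Measure α} {f : α → ℝ} (hf : Integrable f μ) (hf_nonneg : 0 ≤ᵐ[μ] f)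
    (hf_one : ∫ a, f a ∂μ = 1) :
    IsProbabilityMeasure (μ.withDensity fun a => ENNReal.ofReal (f a)) := by
  constructor
  rw [withDensity_apply _ MeasurableSet.univ, Measure.restrict_univ,
    ← ofReal_integral_eq_lintegral_ofReal hf hf_nonneg, hf_one, ENNReal.ofReal_one]

theorem levyDensity_nonneg {t : ℝ} (ht : 0 ≤ t) {s : ℝ} (hs : 0 < s) : 0 ≤ levyDensity t s := by
  unfold levyDensity; positivity

theorem levyDensity_comp_rpow_neg_two (t : ℝ) {x : ℝ} (hx : 0 < x) :
    (|(-2 : ℝ)| * x ^ ((-2 : ℝ) - 1)) • levyDensity t (x ^ (-2 : ℝ)) =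
      t / √π * exp (-(t ^ 2 / 4) * x ^ 2) := by
  have hpow : (x ^ (-2 : ℝ)) ^ (-(3 : ℝ) / 2) = x ^ 3 := by
    rw [← rpow_mul hx.le]; norm_num
  have hexp : -t ^ 2 / (4 * x ^ (-2 : ℝ)) = -(t ^ 2 / 4) * x ^ 2 := by
    rw [rpow_neg hx.le]; norm_num; field_simp
  have hcoef : |(-2 : ℝ)| * x ^ ((-2 : ℝ) - 1) = 2 * (x ^ 3)⁻¹ := by
    rw [rpow_sub hx, rpow_neg hx.le]; norm_num; field_simp
  rw [levyDensity, hpow, hexp, hcoef, smul_eq_mul]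
  field_simp

theorem integrableOn_levyDensity {t : ℝ} (ht : t ≠ 0) : IntegrableOn (levyDensity t) (Ioi 0) := by
  rw [← integrableOn_Ioi_comp_rpow_iff _ (by norm_num : (-2 : ℝ) ≠ 0)]
  refine IntegrableOn.congr_fun ?_ (fun x hx => (levyDensity_comp_rpow_neg_two t hx).symm)
    measurableSet_Ioi
  exact ((integrable_exp_neg_mul_sq (by positivity)).integrableOn).const_mul _

theorem integral_levyDensity {t : ℝ} (ht : 0 < t) : ∫ s in Ioi 0, levyDensity t s = 1 := by
  rw [← integral_comp_rpow_Ioi _ (by norm_num : (-2 : ℝ) ≠ 0),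
    setIntegral_congr_fun measurableSet_Ioi (fun x hx => levyDensity_comp_rpow_neg_two t hx),
    integral_const_mul, integral_gaussian_Ioi]
  have : √(π / (t ^ 2 / 4)) = 2 * √π / t := by
    rw [sqrt_div' _ (by positivity), sqrt_div' _ (by positivity), sqrt_sq ht.le]; norm_num
    field_simp
  rw [this]
  field_simp

/-- `μ_t(ds) = (t/(2√π)) e^{-t²/(4s)} s^{-3/2} ds` is a probability measure on `(0,∞)`. -/
theorem hitting_time_density_is_probability (t : ℝ) (ht : 0 < t) :
    IsProbabilityMeasure
      ((volume.restrict (Set.Ioi (0:ℝ))).withDensity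
        (fun s => ENNReal.ofReal
          (t / (2 * Real.sqrt Real.pi) * Real.exp (-t ^ 2 / (4 * s)) * s ^ (-(3:ℝ) / 2)))) :=
  isProbabilityMeasure_withDensity_ofReal (f := levyDensity t) (integrableOn_levyDensity ht.ne')
    ((ae_restrict_iff' measurableSet_Ioi).2 (.of_forall fun _ hs => levyDensity_nonneg ht.le hs))
    (integral_levyDensity ht)
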